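/- Let f : ℝ^d → ℝ be continuously differentiable with M-Lipschitz gradient (so that |f(x+δ) + f(x−δ) − 2f(x)| ≤ M‖δ‖² for all x, δ), and σ > 0. Then for every x ∈ ℝ^d, the second moment of the antithetic-variable Stein Laplacian estimator integrand is bounded independently of σ: E_{δ∼N(0,σ²I)}[ (((‖δ‖² − σ²d)/(2σ⁴)) · (f(x+δ) + f(x−δ) − 2f(x)))² ] ≤ (M²/4)·(2d³ + 28d² + 48d). -/

import Mathlib

/-!
Comparing `t ↦ f (x + tδ) + f (x - tδ) - 2 f x`, whose derivative is
`⟪∇f (x + tδ) - ∇f (x - tδ), δ⟫`, with `M ‖δ‖² t²` shows `|f (x + δ) + f (x - δ) - 2 f x| ≤ M ‖δ‖²`.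
Hence the squared integrand is at most `M² / (4σ⁸) · (‖δ‖² - σ²d)² ‖δ‖⁴`, whose Gaussian
expectation is read off the even moments `E ‖δ‖^(2k) = σ^(2k) d (d + 2) ⋯ (d + 2k - 2)`;
these are computed in polar coordinates.
-/

open MeasureTheory Real

/-- The Gaussian probability measure `N(0, σ²I)` on `ℝ^d`, defined via its density
with respect to the Lebesgue measure. -/
noncomputable def gaussianMeasure (d : ℕ) (σ : ℝ) :
    Measure (EuclideanSpace ℝ (Fin d)) :=
  volume.withDensity fun δ =>
    ENNReal.ofReal ((2 * π * σ ^ 2) ^ (-(d : ℝ) / 2) * Real.exp (-‖δ‖ ^ 2 / (2 * σ ^ 2)))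

open Set Module

section SecondDifference

variable {E : Type*} [NormedAddCommGroup E] [InnerProductSpace ℝ E] [CompleteSpace E]

theorem abs_second_diff_le_of_norm_gradient_sub_le {f : E → ℝ} (hf : Differentiable ℝ f)
    {M : ℝ} (hM : ∀ x y, ‖gradient f x - gradient f y‖ ≤ M * ‖x - y‖) (x δ : E) :
    |f (x + δ) + f (x - δ) - 2 * f x| ≤ M * ‖δ‖ ^ 2 := by
  set φ' : ℝ → ℝ := fun t => inner ℝ (gradient f (x + t • δ) - gradient f (x - t • δ)) δ
  have hφ : ∀ t : ℝ,
      HasDerivAt (fun s : ℝ => f (x + s • δ) + f (x - s • δ) - 2 * f x) (φ' t) t := by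
    intro t
    have hadd := (hf (x + t • δ)).hasGradientAt.hasFDerivAt.comp_hasDerivAt t
      (((hasDerivAt_id t).smul_const δ).const_add x)
    have hsub := (hf (x - t • δ)).hasGradientAt.hasFDerivAt.comp_hasDerivAt t
      (((hasDerivAt_id t).smul_const δ).const_sub x)
    refine ((hadd.add hsub).sub_const (2 * f x)).congr_deriv ?_
    simp only [φ', InnerProductSpace.toDual_apply_apply, one_smul, inner_neg_right,
      inner_sub_left]
    ring
  have hφ'_le : ∀ t ∈ Ico (0 : ℝ) 1, ‖φ' t‖ ≤ 2 * M * ‖δ‖ ^ 2 * t := by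
    intro t ht
    have hdist : ‖(x + t • δ) - (x - t • δ)‖ = 2 * t * ‖δ‖ := by
      rw [show (x + t • δ) - (x - t • δ) = (2 * t) • δ by module, norm_smul,
        Real.norm_of_nonneg (by linarith [ht.1])]
    calc ‖φ' t‖ ≤ ‖gradient f (x + t • δ) - gradient f (x - t • δ)‖ * ‖δ‖ :=
          norm_inner_le_norm _ _
      _ ≤ M * (2 * t * ‖δ‖) * ‖δ‖ := by
          gcongr
          exact hdist ▸ hM _ _
      _ = 2 * M * ‖δ‖ ^ 2 * t := by ring
  have hB : ∀ t : ℝ, HasDerivAt (fun s => M * ‖δ‖ ^ 2 * s ^ 2) (2 * M * ‖δ‖ ^ 2 * t) t :=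
    fun t => ((hasDerivAt_pow 2 t).const_mul (M * ‖δ‖ ^ 2)).congr_deriv (by push_cast; ring)
  simpa using image_norm_le_of_norm_deriv_right_le_deriv_boundary
    (fun t _ => (hφ t).continuousAt.continuousWithinAt) (fun t _ => (hφ t).hasDerivWithinAt)
    (by simp [two_mul]) hB hφ'_le (right_mem_Icc.2 zero_le_one)

end SecondDifference

theorem integral_Ioi_pow_mul_exp_neg_mul_sq {b : ℝ} (hb : 0 < b) (n : ℕ) :
    ∫ y in Ioi (0 : ℝ), y ^ n * exp (-b * y ^ 2) =
      b ^ (-(n + 1 : ℝ) / 2) / 2 * Gamma ((n + 1) / 2) := by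
  have h := integral_rpow_mul_exp_neg_mul_rpow two_pos (by linarith [n.cast_nonneg (α := ℝ)]) hb
    (q := n)
  simp_rw [rpow_natCast, rpow_two] at h
  rw [h]
  ring

theorem two_pow_mul_Gamma_add_nat_div_Gamma {c : ℝ} (hc : 0 < c) (k : ℕ) :
    2 ^ k * (Gamma (c + k) / Gamma c) = ∏ i ∈ Finset.range k, (2 * c + 2 * i) := by
  induction k with
  | zero => simp [(Gamma_pos_of_pos hc).ne']
  | succ k ih =>
    rw [Finset.prod_range_succ, ← ih, Nat.cast_succ, ← add_assoc, Gamma_add_one (by positivity)]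
    ring

section RadialMoments

variable {E : Type*} [NormedAddCommGroup E] [InnerProductSpace ℝ E] [FiniteDimensional ℝ E]
  [MeasurableSpace E] [BorelSpace E] [Nontrivial E]

theorem integrable_norm_pow_mul_exp_neg_mul_sq {b : ℝ} (hb : 0 < b) (n : ℕ) :
    Integrable fun x : E => ‖x‖ ^ n * exp (-b * ‖x‖ ^ 2) := by
  rw [integrable_fun_norm_addHaar volume (f := fun y => y ^ n * exp (-b * y ^ 2))]
  refine (integrableOn_rpow_mul_exp_neg_mul_sq hb (s := (finrank ℝ E - 1 + n : ℕ))
    (by linarith [(finrank ℝ E - 1 + n : ℕ).cast_nonneg (α := ℝ)])).congr_fun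
    (fun y _ => ?_) measurableSet_Ioi
  simp only [rpow_natCast, pow_add, smul_eq_mul, mul_assoc]

theorem integral_norm_pow_mul_exp_neg_mul_sq {b : ℝ} (hb : 0 < b) (k : ℕ) :
    ∫ x : E, ‖x‖ ^ (2 * k) * exp (-b * ‖x‖ ^ 2) =
      (π / b) ^ (finrank ℝ E / 2 : ℝ) * (Gamma (finrank ℝ E / 2 + k) / Gamma (finrank ℝ E / 2))
        / b ^ k := by
  rw [integral_fun_norm_addHaar volume (fun y => y ^ (2 * k) * exp (-b * y ^ 2)),
    measureReal_def, InnerProductSpace.volume_ball]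
  simp_rw [smul_eq_mul, ← mul_assoc, ← pow_add]
  rw [integral_Ioi_pow_mul_exp_neg_mul_sq hb]
  set n := finrank ℝ E
  have hn : 0 < n := finrank_pos
  have hexp : ((n - 1 + 2 * k : ℕ) : ℝ) + 1 = 2 * (n / 2 + k) := by
    push_cast [Nat.cast_sub hn]; ring
  have hsqrt : √π ^ n = π ^ (n / 2 : ℝ) := by
    rw [sqrt_eq_rpow, ← rpow_natCast, ← rpow_mul pi_pos.le]; ring_nf
  have hb_pow : b ^ (-(2 * (n / 2 + k : ℝ)) / 2) = (b ^ (n / 2 : ℝ))⁻¹ * (b ^ k)⁻¹ := by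
    rw [show -(2 * (n / 2 + k : ℝ)) / 2 = -(n / 2 : ℝ) + -(k : ℝ) by ring,
      rpow_add hb, rpow_neg hb.le, rpow_neg hb.le, rpow_natCast]
  have hΓ : Gamma (n / 2 + 1) = n / 2 * Gamma (n / 2) := Gamma_add_one (by positivity)
  rw [hexp, hb_pow, mul_div_cancel_left₀ _ two_ne_zero, hsqrt, hΓ, ENNReal.ofReal_one, one_pow,
    one_mul, ENNReal.toReal_ofReal (by positivity), div_rpow pi_pos.le hb.le, nsmul_eq_mul]
  have := (Gamma_pos_of_pos (by positivity : (0 : ℝ) < n / 2)).ne'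
  field_simp

end RadialMoments

section GaussianMoments

variable {d : ℕ} {σ : ℝ}

noncomputable def gaussianDensity (d : ℕ) (σ : ℝ) (δ : EuclideanSpace ℝ (Fin d)) : ℝ :=
  (2 * π * σ ^ 2) ^ (-(d : ℝ) / 2) * exp (-‖δ‖ ^ 2 / (2 * σ ^ 2))

theorem gaussianDensity_nonneg (δ : EuclideanSpace ℝ (Fin d)) : 0 ≤ gaussianDensity d σ δ := by
  unfold gaussianDensity; positivity

theorem gaussianDensity_eq (δ : EuclideanSpace ℝ (Fin d)) :
    gaussianDensity d σ δ =
      (π / (2 * σ ^ 2)⁻¹) ^ (-(d : ℝ) / 2) * exp (-(2 * σ ^ 2)⁻¹ * ‖δ‖ ^ 2) := by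
  unfold gaussianDensity
  congr 2
  · rw [div_inv_eq_mul]; ring
  · ring

theorem withDensity_gaussianDensity :
    volume.withDensity (fun δ => ENNReal.ofReal (gaussianDensity d σ δ)) = gaussianMeasure d σ :=
  rfl

theorem integral_gaussianMeasure (g : EuclideanSpace ℝ (Fin d) → ℝ) :
    ∫ δ, g δ ∂gaussianMeasure d σ = ∫ δ, gaussianDensity d σ δ * g δ := by
  rw [← withDensity_gaussianDensity, integral_withDensity_eq_integral_toReal_smul
    (by fun_prop [gaussianDensity]) (ae_of_all _ fun _ => ENNReal.ofReal_lt_top)]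
  simp_rw [ENNReal.toReal_ofReal (gaussianDensity_nonneg _), smul_eq_mul]

theorem integrable_gaussianMeasure_iff {g : EuclideanSpace ℝ (Fin d) → ℝ} :
    Integrable g (gaussianMeasure d σ) ↔ Integrable fun δ => gaussianDensity d σ δ * g δ := by
  rw [← withDensity_gaussianDensity, integrable_withDensity_iff_integrable_smul'
    (by fun_prop [gaussianDensity]) (ae_of_all _ fun _ => ENNReal.ofReal_lt_top)]
  simp_rw [ENNReal.toReal_ofReal (gaussianDensity_nonneg _), smul_eq_mul]

theorem integrable_norm_pow_gaussianMeasure (hd : 0 < d) (hσ : σ ≠ 0) (n : ℕ) :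
    Integrable (fun δ => ‖δ‖ ^ n) (gaussianMeasure d σ) := by
  have : Nonempty (Fin d) := Fin.pos_iff_nonempty.mp hd
  rw [integrable_gaussianMeasure_iff]
  refine ((integrable_norm_pow_mul_exp_neg_mul_sq (b := (2 * σ ^ 2)⁻¹) (by positivity) n).const_mul
    ((π / (2 * σ ^ 2)⁻¹) ^ (-(d : ℝ) / 2))).congr (ae_of_all _ fun δ => ?_)
  simp only [gaussianDensity_eq]
  ring

theorem integral_norm_pow_gaussianMeasure (hd : 0 < d) (hσ : σ ≠ 0) (k : ℕ) :
    ∫ δ, ‖δ‖ ^ (2 * k) ∂gaussianMeasure d σ =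
      σ ^ (2 * k) * ∏ i ∈ Finset.range k, (d + 2 * i : ℝ) := by
  have : Nonempty (Fin d) := Fin.pos_iff_nonempty.mp hd
  have hb : 0 < (2 * σ ^ 2)⁻¹ := by positivity
  have hdens : ∀ δ : EuclideanSpace ℝ (Fin d), gaussianDensity d σ δ * ‖δ‖ ^ (2 * k) =
      (π / (2 * σ ^ 2)⁻¹) ^ (-(d : ℝ) / 2) *
        (‖δ‖ ^ (2 * k) * exp (-(2 * σ ^ 2)⁻¹ * ‖δ‖ ^ 2)) := fun δ => by
    rw [gaussianDensity_eq]; ring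
  rw [integral_gaussianMeasure, integral_congr_ae (ae_of_all _ hdens), integral_const_mul,
    integral_norm_pow_mul_exp_neg_mul_sq hb, finrank_euclideanSpace_fin, neg_div,
    rpow_neg (by positivity), mul_div_assoc, inv_mul_cancel_left₀ (by positivity), inv_pow,
    div_inv_eq_mul]
  have hprod : ∏ i ∈ Finset.range k, (d + 2 * i : ℝ) =
      2 ^ k * (Gamma (d / 2 + k) / Gamma (d / 2)) := by
    rw [two_pow_mul_Gamma_add_nat_div_Gamma (by positivity)]
    exact Finset.prod_congr rfl fun i _ => by ring
  rw [hprod]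
  ring

theorem integrable_norm_sq_sub_sq_mul_norm_pow_four_gaussianMeasure (hd : 0 < d) (hσ : σ ≠ 0)
    (c : ℝ) : Integrable (fun δ => (‖δ‖ ^ 2 - c) ^ 2 * ‖δ‖ ^ 4) (gaussianMeasure d σ) := by
  have hint := integrable_norm_pow_gaussianMeasure hd hσ
  refine (((hint 8).sub ((hint 6).const_mul (2 * c))).add ((hint 4).const_mul (c ^ 2))).congr
    (ae_of_all _ fun δ => ?_)
  simp only [Pi.add_apply, Pi.sub_apply]
  ring

theorem integral_norm_sq_sub_sq_mul_norm_pow_four_gaussianMeasure (hd : 0 < d) (hσ : σ ≠ 0) :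
    ∫ δ, (‖δ‖ ^ 2 - σ ^ 2 * d) ^ 2 * ‖δ‖ ^ 4 ∂gaussianMeasure d σ =
      σ ^ 8 * (2 * (d : ℝ) ^ 3 + 28 * (d : ℝ) ^ 2 + 48 * d) := by
  have hint := integrable_norm_pow_gaussianMeasure hd hσ
  have hexpand : ∀ δ : EuclideanSpace ℝ (Fin d), (‖δ‖ ^ 2 - σ ^ 2 * d) ^ 2 * ‖δ‖ ^ 4 =
      ‖δ‖ ^ (2 * 4) - 2 * σ ^ 2 * d * ‖δ‖ ^ (2 * 3) + σ ^ 4 * d ^ 2 * ‖δ‖ ^ (2 * 2) :=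
    fun δ => by ring
  simp_rw [hexpand]
  rw [integral_add, integral_sub, integral_const_mul, integral_const_mul,
    integral_norm_pow_gaussianMeasure hd hσ, integral_norm_pow_gaussianMeasure hd hσ,
    integral_norm_pow_gaussianMeasure hd hσ]
  · simp only [Finset.prod_range_succ, Finset.prod_range_zero]
    ring
  · exact hint _
  · exact (hint _).const_mul _
  · exact (hint _).sub ((hint _).const_mul _)
  · exact (hint _).const_mul _

end GaussianMoments

theorem antithetic_laplacian_estimator_second_moment (d : ℕ) (hd : 0 < d)
    (σ : ℝ) (hσ : 0 < σ)
    (f : EuclideanSpace ℝ (Fin d) → ℝ) (hf : ContDiff ℝ 1 f)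
    (M : ℝ) (hM : ∀ x y, ‖gradient f x - gradient f y‖ ≤ M * ‖x - y‖) :
    ∀ x, (∫ δ, (((‖δ‖ ^ 2 - σ ^ 2 * d) / (2 * σ ^ 4)) *
          (f (x + δ) + f (x - δ) - 2 * f x)) ^ 2 ∂(gaussianMeasure d σ)) ≤
      M ^ 2 / 4 * (2 * (d : ℝ) ^ 3 + 28 * (d : ℝ) ^ 2 + 48 * d) := by
  intro x
  have hpointwise : ∀ δ, (((‖δ‖ ^ 2 - σ ^ 2 * d) / (2 * σ ^ 4)) *
      (f (x + δ) + f (x - δ) - 2 * f x)) ^ 2 ≤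
        M ^ 2 / (4 * σ ^ 8) * ((‖δ‖ ^ 2 - σ ^ 2 * d) ^ 2 * ‖δ‖ ^ 4) := fun δ => by
    have hdiff := abs_second_diff_le_of_norm_gradient_sub_le (hf.differentiable one_ne_zero) hM x δ
    calc _ = ((‖δ‖ ^ 2 - σ ^ 2 * d) / (2 * σ ^ 4)) ^ 2 * |f (x + δ) + f (x - δ) - 2 * f x| ^ 2 := by
          rw [mul_pow, sq_abs]
      _ ≤ ((‖δ‖ ^ 2 - σ ^ 2 * d) / (2 * σ ^ 4)) ^ 2 * (M * ‖δ‖ ^ 2) ^ 2 := by gcongr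
      _ = _ := by field_simp; ring
  calc _ ≤ ∫ δ, M ^ 2 / (4 * σ ^ 8) * ((‖δ‖ ^ 2 - σ ^ 2 * d) ^ 2 * ‖δ‖ ^ 4)
          ∂gaussianMeasure d σ :=
        integral_mono_of_nonneg (ae_of_all _ fun _ => sq_nonneg _)
          ((integrable_norm_sq_sub_sq_mul_norm_pow_four_gaussianMeasure hd hσ.ne' _).const_mul _)
          (ae_of_all _ hpointwise)
    _ = _ := by
        rw [integral_const_mul, integral_norm_sq_sub_sq_mul_norm_pow_four_gaussianMeasure hd hσ.ne']
        field_simp
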